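/- arXiv:1309.3085 — 2 statements merged into one kernel-verified Lean document; each statement's English description precedes it below -/
import Mathlib

section
/- Let V : ℝ^N → ℝ be C², G = ‖∇V‖² > 0, and suppose q(s) satisfies dq^i/ds = ∂V/∂q^i(q(s)) and ν(s) satisfies dν/ds = G(q(s)). Then (q(s), ν(s)) satisfies the geodesic equations of the metric diag(1,…,1,−1/G): namely d²ν/ds² − (2/G) (dν/ds) Σ_j (dq^j/ds) H_j = 0 and d²q^i/ds² − (H_i/G²)(dν/ds)² = 0 for all i, where H_i = Σ_k (∂V/∂q^k)(∂²V/∂q^k∂q^i). -/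
open scoped BigOperators

/-- Partial derivative of `f : ℝ^N → ℝ` in direction `i`. -/
noncomputable def pd {N : ℕ} (f : (Fin N → ℝ) → ℝ) (i : Fin N) (q : Fin N → ℝ) : ℝ :=
  fderiv ℝ f q (Pi.single i 1)

/-- Second partial derivative `∂²f/∂q^i∂q^j`. -/
noncomputable def pd2 {N : ℕ} (f : (Fin N → ℝ) → ℝ) (i j : Fin N) (q : Fin N → ℝ) : ℝ :=
  pd (fun x => pd f j x) i q


/-- `H_i(q) = Σ_k (∂V/∂q^k)(∂²V/∂q^k∂q^i)`, the product of the Hessian with the gradient. -/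
noncomputable def Hvec {N : ℕ} (V : (Fin N → ℝ) → ℝ) (i : Fin N) (q : Fin N → ℝ) : ℝ :=
  ∑ k, pd V k q * pd2 V k i q

/-!
Along a steepest-ascent curve `q' = ∇V(q)` the chain rule gives `(∂V/∂q^i ∘ q)' = H_i ∘ q`,
so `q'' = H(q)` and `ν'' = (G ∘ q)' = 2 ⟨∇V, H⟩(q)`. Substituting `ν' = G(q)` and `q' = ∇V(q)`
into the geodesic equations turns both into identities.
-/

section

variable {N : ℕ}

theorem fderiv_apply_eq_sum_pd (f : (Fin N → ℝ) → ℝ) (x v : Fin N → ℝ) :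
    fderiv ℝ f x v = ∑ k, v k * pd f k x := by
  conv_lhs => rw [← Finset.univ_sum_single v]
  simp only [map_sum, pd]
  refine Finset.sum_congr rfl fun k _ => ?_
  rw [← smul_eq_mul, ← map_smul, ← Pi.single_smul', smul_eq_mul, mul_one]

theorem hasDerivAt_comp_eq_sum_pd {f : (Fin N → ℝ) → ℝ} {q : ℝ → Fin N → ℝ}
    {q' : Fin N → ℝ} {s : ℝ} (hf : DifferentiableAt ℝ f (q s)) (hq : HasDerivAt q q' s) :
    HasDerivAt (fun t => f (q t)) (∑ k, q' k * pd f k (q s)) s := by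
  rw [← fderiv_apply_eq_sum_pd]
  exact hf.hasFDerivAt.comp_hasDerivAt s hq

theorem differentiable_pd {V : (Fin N → ℝ) → ℝ} (hV : ContDiff ℝ 2 V) (i : Fin N) :
    Differentiable ℝ (pd V i) :=
  ((hV.fderiv_right (m := 1) le_rfl).clm_apply contDiff_const).differentiable one_ne_zero

variable {V : (Fin N → ℝ) → ℝ} {q : ℝ → Fin N → ℝ} {s : ℝ}

theorem hasDerivAt_pd_comp_of_gradient_flow (hV : ContDiff ℝ 2 V)
    (hq : HasDerivAt q (fun i => pd V i (q s)) s) (i : Fin N) :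
    HasDerivAt (fun t => pd V i (q t)) (Hvec V i (q s)) s :=
  hasDerivAt_comp_eq_sum_pd (differentiable_pd hV i (q s)) hq

theorem hasDerivAt_sum_sq_pd_comp_of_gradient_flow (hV : ContDiff ℝ 2 V)
    (hq : HasDerivAt q (fun i => pd V i (q s)) s) :
    HasDerivAt (fun t => ∑ i, pd V i (q t) ^ 2) (2 * ∑ i, pd V i (q s) * Hvec V i (q s)) s := by
  refine (HasDerivAt.fun_sum fun i (_ : i ∈ Finset.univ) =>
    (hasDerivAt_pd_comp_of_gradient_flow hV hq i).fun_pow 2).congr_deriv ?_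
  simp only [Finset.mul_sum]
  exact Finset.sum_congr rfl fun i _ => by norm_num [mul_assoc]

end

/-- Steepest-ascent curves, together with `dν/ds = G(q(s))`, satisfy the geodesic
equations of the metric `diag(1,…,1,−1/G)` with `G = ‖∇V‖²`. -/
theorem steepest_ascent_is_geodesic {N : ℕ} (V : (Fin N → ℝ) → ℝ)
    (hV : ContDiff ℝ 2 V) (G : (Fin N → ℝ) → ℝ)
    (hG : G = fun q => ∑ i, (pd V i q) ^ 2)
    (hpos : ∀ q, 0 < G q)
    (q : ℝ → Fin N → ℝ) (ν : ℝ → ℝ)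
    (hq : ∀ s, HasDerivAt q (fun i => pd V i (q s)) s)
    (hν : ∀ s, HasDerivAt ν (G (q s)) s) :
    ∀ s : ℝ,
      (deriv (deriv ν) s
          - (2 / G (q s)) * deriv ν s
              * (∑ j, deriv (fun t => q t j) s * Hvec V j (q s)) = 0) ∧
      (∀ i : Fin N,
        deriv (deriv fun t => q t i) s
          - (Hvec V i (q s) / (G (q s)) ^ 2) * (deriv ν s) ^ 2 = 0) := by
  intro s
  have hdν : deriv ν = fun t => G (q t) := funext fun t => (hν t).deriv
  have hdq : ∀ i, deriv (fun t => q t i) = fun t => pd V i (q t) :=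
    fun i => funext fun t => (hasDerivAt_pi.mp (hq t) i).deriv
  have hd2ν : deriv (deriv ν) s = 2 * ∑ i, pd V i (q s) * Hvec V i (q s) := by
    rw [hdν]
    subst hG
    exact (hasDerivAt_sum_sq_pd_comp_of_gradient_flow hV (hq s)).deriv
  have hd2q : ∀ i, deriv (deriv fun t => q t i) s = Hvec V i (q s) := fun i => by
    rw [hdq i]
    exact (hasDerivAt_pd_comp_of_gradient_flow hV (hq s) i).deriv
  have hGne : G (q s) ≠ 0 := (hpos (q s)).ne'
  refine ⟨?_, fun i => ?_⟩
  · rw [hd2ν, hdν]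
    simp only [hdq]
    field_simp
    ring
  · rw [hd2q, hdν]
    field_simp
    ring
end

section
/- For the metric diag(1,…,1,−1/G(q)) with G positive and C², the spatial Ricci components are R_{jk} = −(1/2) ∂/∂q^j ( G ∂(1/G)/∂q^k ) − (1/4) G² (∂(1/G)/∂q^j)(∂(1/G)/∂q^k). -/
open scoped BigOperators

/-- Partial derivative on `ℝ^{N+1}`. -/
noncomputable def pdx {N : ℕ} (f : (Fin (N + 1) → ℝ) → ℝ) (I : Fin (N + 1))
    (x : Fin (N + 1) → ℝ) : ℝ :=
  fderiv ℝ f x (Pi.single I 1)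

/-- Covariant metric `diag(1,…,1,−1/G(q))` on `ℝ^{N+1}`. -/
noncomputable def gcov {N : ℕ} (G : (Fin N → ℝ) → ℝ) (x : Fin (N + 1) → ℝ) :
    Matrix (Fin (N + 1)) (Fin (N + 1)) ℝ :=
  Matrix.diagonal (fun I => if I = Fin.last N then -1 / G (x ∘ Fin.castSucc) else 1)

/-- Contravariant metric `diag(1,…,1,−G(q))` on `ℝ^{N+1}`. -/
noncomputable def gcon {N : ℕ} (G : (Fin N → ℝ) → ℝ) (x : Fin (N + 1) → ℝ) :
    Matrix (Fin (N + 1)) (Fin (N + 1)) ℝ :=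
  Matrix.diagonal (fun I => if I = Fin.last N then -G (x ∘ Fin.castSucc) else 1)

/-- Christoffel symbols of the second kind,
`Γ^I_{JK} = ½ g^{IL}(∂_K g_{LJ} + ∂_J g_{KL} − ∂_L g_{JK})`. -/
noncomputable def Gamma {N : ℕ} (G : (Fin N → ℝ) → ℝ) (I J K : Fin (N + 1))
    (x : Fin (N + 1) → ℝ) : ℝ :=
  (1 / 2) * ∑ L, gcon G x I L *
    (pdx (fun y => gcov G y L J) K x + pdx (fun y => gcov G y K L) J x
      - pdx (fun y => gcov G y J K) L x)

/-- `H_k = ½ ∂G/∂q^k`. -/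
noncomputable def Hh {N : ℕ} (G : (Fin N → ℝ) → ℝ) (k : Fin N) (q : Fin N → ℝ) : ℝ :=
  (1 / 2) * pd G k q

/-- Curvature tensor
`R^L_{IJK} = ∂_I Γ^L_{JK} − ∂_J Γ^L_{IK} − Σ_M (Γ^M_{IK} Γ^L_{JM} − Γ^M_{JK} Γ^L_{IM})`. -/
noncomputable def Riem {N : ℕ} (G : (Fin N → ℝ) → ℝ) (L I J K : Fin (N + 1))
    (x : Fin (N + 1) → ℝ) : ℝ :=
  pdx (fun y => Gamma G L J K y) I x - pdx (fun y => Gamma G L I K y) J x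
    - ∑ M, (Gamma G M I K x * Gamma G L J M x - Gamma G M J K x * Gamma G L I M x)

/-- Ricci tensor `R_{JK} = Σ_M R^M_{MJK}`. -/
noncomputable def Ric {N : ℕ} (G : (Fin N → ℝ) → ℝ) (J K : Fin (N + 1))
    (x : Fin (N + 1) → ℝ) : ℝ :=
  ∑ M, Riem G M M J K x

/-! Only `g_{NN} = -1/G` is non-constant and it depends on the spatial coordinates alone, so a
Christoffel symbol vanishes unless two of its indices are the time index `N`. With two spatial
lower indices this kills every Christoffel symbol and every spatial Riemann component
`R^m_{mjk}`, leaving `R_{jk} = R^N_{Njk} = -∂_j Γ^N_{Nk} - Γ^N_{Nk} Γ^N_{jN}` with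
`Γ^N_{Nk} = Γ^N_{kN} = ½ G ∂_k(1/G)`. -/

open Fin

lemma pdx_comp_castSucc {N : ℕ} {f : (Fin N → ℝ) → ℝ} {x : Fin (N + 1) → ℝ}
    (hf : DifferentiableAt ℝ f (x ∘ castSucc)) (k : Fin N) :
    pdx (fun y => f (y ∘ castSucc)) k.castSucc x = pd f k (x ∘ castSucc) := by
  let π : (Fin (N + 1) → ℝ) →L[ℝ] (Fin N → ℝ) :=
    ContinuousLinearMap.pi fun i => ContinuousLinearMap.proj i.castSucc
  have hπ : π (Pi.single k.castSucc 1) = Pi.single k 1 := by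
    funext i
    simp [π, Pi.single_apply, castSucc_inj]
  rw [pdx, show (fun y => f (y ∘ castSucc)) = f ∘ π from rfl,
    fderiv_comp x hf π.differentiableAt, π.fderiv, ContinuousLinearMap.comp_apply, hπ]
  rfl

lemma pd_neg {N : ℕ} (f : (Fin N → ℝ) → ℝ) (i : Fin N) (q : Fin N → ℝ) :
    pd (fun y => -f y) i q = -pd f i q := by
  rw [pd, fderiv_fun_neg]
  rfl

lemma pd_const_mul {N : ℕ} {f : (Fin N → ℝ) → ℝ} {q : Fin N → ℝ} (hf : DifferentiableAt ℝ f q)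
    (c : ℝ) (i : Fin N) : pd (fun y => c * f y) i q = c * pd f i q := by
  rw [pd, fderiv_const_mul hf]
  rfl

lemma pdx_const {N : ℕ} (c : ℝ) (K : Fin (N + 1)) (x : Fin (N + 1) → ℝ) :
    pdx (fun _ => c) K x = 0 := by
  simp [pdx]

lemma gcov_comm {N : ℕ} (G : (Fin N → ℝ) → ℝ) (y : Fin (N + 1) → ℝ) (L J : Fin (N + 1)) :
    gcov G y L J = gcov G y J L :=
  (Matrix.isSymm_diagonal _).apply J L

lemma gcov_of_not_last_last {N : ℕ} (G : (Fin N → ℝ) → ℝ) (y : Fin (N + 1) → ℝ)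
    {L J : Fin (N + 1)} (h : L ≠ last N ∨ J ≠ last N) :
    gcov G y L J = if L = J then 1 else 0 := by
  rcases eq_or_ne L J with rfl | hLJ
  · simp [gcov, h.elim id id]
  · simp [gcov, hLJ]

lemma pdx_gcov_of_not_last_last {N : ℕ} (G : (Fin N → ℝ) → ℝ) {L J : Fin (N + 1)}
    (h : L ≠ last N ∨ J ≠ last N) (K : Fin (N + 1)) (x : Fin (N + 1) → ℝ) :
    pdx (fun y => gcov G y L J) K x = 0 := by
  simp only [gcov_of_not_last_last G _ h, pdx_const]

lemma pdx_gcov_last_last {N : ℕ} {G : (Fin N → ℝ) → ℝ}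
    (hinv : Differentiable ℝ fun q => 1 / G q) (k : Fin N) (x : Fin (N + 1) → ℝ) :
    pdx (fun y => gcov G y (last N) (last N)) k.castSucc x
      = -pd (fun q => 1 / G q) k (x ∘ castSucc) := by
  have hg : (fun y => gcov G y (last N) (last N)) = fun y => -(1 / G (y ∘ castSucc)) := by
    funext y
    simp [gcov, neg_div]
  rw [hg, pdx_comp_castSucc (f := fun q => -(1 / G q)) (hinv _).neg, pd_neg]

lemma Gamma_eq {N : ℕ} (G : (Fin N → ℝ) → ℝ) (I J K : Fin (N + 1)) (x : Fin (N + 1) → ℝ) :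
    Gamma G I J K x = (1 / 2) * gcon G x I I *
      (pdx (fun y => gcov G y I J) K x + pdx (fun y => gcov G y K I) J x
        - pdx (fun y => gcov G y J K) I x) := by
  rw [Gamma, Finset.sum_eq_single I (fun L _ hL => by simp [gcon, Ne.symm hL]) (by simp),
    mul_assoc]

lemma Gamma_comm {N : ℕ} (G : (Fin N → ℝ) → ℝ) (I J K : Fin (N + 1)) (x : Fin (N + 1) → ℝ) :
    Gamma G I J K x = Gamma G I K J x := by
  simp only [Gamma_eq, gcov_comm G _ J K, gcov_comm G _ I]
  ring

lemma Gamma_eq_zero {N : ℕ} (G : (Fin N → ℝ) → ℝ) {I J K : Fin (N + 1)}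
    (hIJ : I ≠ last N ∨ J ≠ last N) (hKI : K ≠ last N ∨ I ≠ last N)
    (hJK : J ≠ last N ∨ K ≠ last N) (x : Fin (N + 1) → ℝ) :
    Gamma G I J K x = 0 := by
  simp [Gamma_eq, pdx_gcov_of_not_last_last G hIJ, pdx_gcov_of_not_last_last G hKI,
    pdx_gcov_of_not_last_last G hJK]

lemma Gamma_castSucc_castSucc {N : ℕ} (G : (Fin N → ℝ) → ℝ) (I : Fin (N + 1)) (j k : Fin N)
    (x : Fin (N + 1) → ℝ) : Gamma G I j.castSucc k.castSucc x = 0 :=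
  Gamma_eq_zero G (.inr (castSucc_ne_last j)) (.inl (castSucc_ne_last k))
    (.inl (castSucc_ne_last j)) x

lemma Gamma_castSucc_last_castSucc {N : ℕ} (G : (Fin N → ℝ) → ℝ) (m k : Fin N)
    (x : Fin (N + 1) → ℝ) : Gamma G m.castSucc (last N) k.castSucc x = 0 :=
  Gamma_eq_zero G (.inl (castSucc_ne_last m)) (.inl (castSucc_ne_last k))
    (.inr (castSucc_ne_last k)) x

lemma Gamma_last_last_castSucc {N : ℕ} {G : (Fin N → ℝ) → ℝ}
    (hinv : Differentiable ℝ fun q => 1 / G q) (k : Fin N) (x : Fin (N + 1) → ℝ) :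
    Gamma G (last N) (last N) k.castSucc x
      = (1 / 2) * (G (x ∘ castSucc) * pd (fun q => 1 / G q) k (x ∘ castSucc)) := by
  rw [Gamma_eq, pdx_gcov_last_last hinv,
    pdx_gcov_of_not_last_last G (.inl (castSucc_ne_last k)),
    pdx_gcov_of_not_last_last G (.inr (castSucc_ne_last k))]
  simp only [gcon, Matrix.diagonal_apply_eq, ↓reduceIte]
  ring

lemma Riem_castSucc_self_castSucc_castSucc {N : ℕ} (G : (Fin N → ℝ) → ℝ) (m j k : Fin N)
    (x : Fin (N + 1) → ℝ) : Riem G m.castSucc m.castSucc j.castSucc k.castSucc x = 0 := by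
  simp [Riem, Gamma_castSucc_castSucc, pdx_const]

lemma Riem_last_last_castSucc_castSucc {N : ℕ} (G : (Fin N → ℝ) → ℝ) (j k : Fin N)
    (x : Fin (N + 1) → ℝ) :
    Riem G (last N) (last N) j.castSucc k.castSucc x
      = -pdx (fun y => Gamma G (last N) (last N) k.castSucc y) j.castSucc x
        - Gamma G (last N) (last N) k.castSucc x * Gamma G (last N) j.castSucc (last N) x := by
  simp [Riem, Gamma_castSucc_castSucc, pdx_const, Fin.sum_univ_castSucc,
    Gamma_castSucc_last_castSucc]

lemma Ric_castSucc_castSucc {N : ℕ} (G : (Fin N → ℝ) → ℝ) (j k : Fin N)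
    (x : Fin (N + 1) → ℝ) :
    Ric G j.castSucc k.castSucc x = Riem G (last N) (last N) j.castSucc k.castSucc x := by
  simp [Ric, Fin.sum_univ_castSucc, Riem_castSucc_self_castSucc_castSucc]

/-- The spatial Ricci components of the metric `diag(1,…,1,−1/G)` are
`R_{jk} = −½ ∂_j(G ∂_k(1/G)) − ¼ G² ∂_j(1/G) ∂_k(1/G)`. -/
theorem ricci_spatial_of_levelset_metric {N : ℕ} (G : (Fin N → ℝ) → ℝ)
    (hG : ContDiff ℝ 2 G) (hpos : ∀ q, 0 < G q) :
    ∀ (x : Fin (N + 1) → ℝ) (j k : Fin N),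
      Ric G j.castSucc k.castSucc x
        = -(1 / 2) * pd (fun y => G y * pd (fun q => 1 / G q) k y) j (x ∘ Fin.castSucc)
          - (1 / 4) * (G (x ∘ Fin.castSucc)) ^ 2
              * pd (fun q => 1 / G q) j (x ∘ Fin.castSucc)
              * pd (fun q => 1 / G q) k (x ∘ Fin.castSucc) := by
  intro x j k
  have hinv : ContDiff ℝ 2 fun q => 1 / G q := contDiff_const.div hG fun q => (hpos q).ne'
  have hinv' : Differentiable ℝ fun q => 1 / G q := hinv.differentiable two_ne_zero
  have hGamma : Differentiable ℝ fun q => G q * pd (fun q => 1 / G q) k q :=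
    (hG.differentiable two_ne_zero).mul
      ((hinv.fderiv_right (m := 1) le_rfl).clm_apply contDiff_const |>.differentiable
        one_ne_zero)
  have hdGamma : pdx (fun y => Gamma G (last N) (last N) k.castSucc y) j.castSucc x
      = (1 / 2) * pd (fun q => G q * pd (fun q => 1 / G q) k q) j (x ∘ castSucc) := by
    simp only [Gamma_last_last_castSucc hinv']
    rw [pdx_comp_castSucc ((hGamma _).const_mul _), pd_const_mul (hGamma _)]
  rw [Ric_castSucc_castSucc, Riem_last_last_castSucc_castSucc, hdGamma, Gamma_comm G _ j.castSucc,
    Gamma_last_last_castSucc hinv', Gamma_last_last_castSucc hinv']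
  ring
end
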